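/- Let β ≥ 0 and let A = (a_{n,k}) be a lower triangular infinite matrix of nonnegative real numbers (a_{n,k} = 0 for k > n). Suppose there is a constant C, independent of n and m, such that Σ_{k=0}^{m-1} (k+1)^β |a_{n,k}/(k+1)^β − a_{n,k+1}/(k+2)^β| ≤ C·a_{n,m} for all 0 ≤ m ≤ n. Then, uniformly in 0 < t ≤ π, |K_n(t)| := |Σ_{k=0}^{n} a_{n,k} · sin((k+1/2)t)/(2 sin(t/2))| = O(a_{n,n}/t²), with the implied constant independent of n and t. -/

import Mathlib

/-!
Summation by parts writes `K_n(t)` through the partial sums of `sin((k+1/2)t) / (2 sin(t/2))`,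
which equal `sin²(mt/2) / (2 sin²(t/2))` and hence are `O(1/t²)` by Jordan's inequality, against
the differences `a_{n,k} - a_{n,k+1}`. Writing `a_{n,k} = (k+1)^β b_k`, the total variation of the
row is at most `a_{n,n}` plus twice the weighted variation `∑ (k+1)^β |b_k - b_{k+1}|`, which the
hypothesis bounds by `C a_{n,n}`.
-/

open Real MeasureTheory

/-- The kernel `K_n(t) = ∑_{k=0}^n a_{n,k} sin((k+1/2)t) / (2 sin(t/2))`. -/
noncomputable def kernelK (a : ℕ → ℕ → ℝ) (n : ℕ) (t : ℝ) : ℝ :=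
  ∑ k ∈ Finset.range (n + 1), a n k * Real.sin (((k : ℝ) + 1 / 2) * t) / (2 * Real.sin (t / 2))

open Finset

theorem norm_sum_range_succ_smul_le {E : Type*} [SeminormedAddCommGroup E] [NormedSpace ℝ E]
    (f : ℕ → ℝ) (g : ℕ → E) {B : ℝ} (hg : ∀ m, ‖∑ i ∈ range m, g i‖ ≤ B) (n : ℕ) :
    ‖∑ i ∈ range (n + 1), f i • g i‖ ≤ (|f n| + ∑ i ∈ range n, |f i - f (i + 1)|) * B := by
  rw [sum_range_by_parts, Nat.add_sub_cancel, add_mul, sum_mul]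
  refine (norm_sub_le _ _).trans (add_le_add ?_ ((norm_sum_le _ _).trans (sum_le_sum ?_)))
  · rw [norm_smul, Real.norm_eq_abs]
    exact mul_le_mul_of_nonneg_left (hg _) (abs_nonneg _)
  · intro i _
    rw [norm_smul, Real.norm_eq_abs, abs_sub_comm]
    exact mul_le_mul_of_nonneg_left (hg _) (abs_nonneg _)

theorem sum_abs_sub_succ_le (a w : ℕ → ℝ) (ha : ∀ k, 0 ≤ a k) (hw : ∀ k, 0 < w k)
    (hmono : Monotone w) (n : ℕ) :
    ∑ k ∈ range n, |a k - a (k + 1)|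
      ≤ a n + 2 * ∑ k ∈ range n, w k * |a k / w k - a (k + 1) / w (k + 1)| := by
  set b : ℕ → ℝ := fun k => a k / w k
  have hab : ∀ k, a k = w k * b k := fun k => (mul_div_cancel₀ _ (hw k).ne').symm
  have hb : ∀ k, 0 ≤ b k := fun k => div_nonneg (ha k) (hw k).le
  have hstep : ∀ k, (w (k + 1) - w k) * b (k + 1) = (a (k + 1) - a k) + w k * (b k - b (k + 1)) :=
    fun k => by rw [hab, hab]; ring
  have hpointwise : ∀ k, |a k - a (k + 1)|
      ≤ w k * |b k - b (k + 1)| + (w (k + 1) - w k) * b (k + 1) := fun k => by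
    have hwb : 0 ≤ (w (k + 1) - w k) * b (k + 1) :=
      mul_nonneg (sub_nonneg.2 (hmono k.le_succ)) (hb _)
    calc |a k - a (k + 1)| = |w k * (b k - b (k + 1)) - (w (k + 1) - w k) * b (k + 1)| := by
          rw [hab k, hab (k + 1)]; ring_nf
      _ ≤ |w k * (b k - b (k + 1))| + |(w (k + 1) - w k) * b (k + 1)| := abs_sub _ _
      _ = _ := by rw [abs_mul, abs_of_pos (hw k), abs_of_nonneg hwb]
  have hgrowth : ∑ k ∈ range n, (w (k + 1) - w k) * b (k + 1)
      ≤ a n + ∑ k ∈ range n, w k * |b k - b (k + 1)| := by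
    rw [sum_congr rfl fun k _ => hstep k, sum_add_distrib, sum_range_sub]
    gcongr with k
    · linarith [ha 0]
    · exact (hw k).le
    · exact le_abs_self _
  calc ∑ k ∈ range n, |a k - a (k + 1)|
      ≤ ∑ k ∈ range n, (w k * |b k - b (k + 1)| + (w (k + 1) - w k) * b (k + 1)) :=
        sum_le_sum fun k _ => hpointwise k
    _ ≤ _ := by rw [sum_add_distrib]; linarith

theorem abs_sum_range_sin_div_two_sin_half_le {t : ℝ} (ht : 0 < t) (htπ : t ≤ π) (m : ℕ) :
    |∑ j ∈ range m, sin (((j : ℝ) + 1 / 2) * t) / (2 * sin (t / 2))| ≤ π ^ 2 / (2 * t ^ 2) := by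
  have hs : 0 < sin (t / 2) := sin_pos_of_pos_of_lt_pi (by linarith) (by linarith [pi_pos])
  have hjordan : t / π ≤ sin (t / 2) := by
    simpa using mul_le_sin (x := t / 2) (by positivity) (by linarith)
  have hsum : ∑ j ∈ range m, sin (((j : ℝ) + 1 / 2) * t) / (2 * sin (t / 2))
      = sin (m * t / 2) ^ 2 / (2 * sin (t / 2) ^ 2) := by
    have := Real.sin_mul_sum_sin m t (t / 2)
    rw [← sum_div, div_eq_div_iff (by positivity) (by positivity)]
    ring_nf at this ⊢
    rw [← this]; ring
  rw [hsum, abs_of_nonneg (by positivity), div_le_div_iff₀ (by positivity) (by positivity)]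
  have hπt : t ^ 2 ≤ π ^ 2 * sin (t / 2) ^ 2 := by
    rw [div_le_iff₀ pi_pos] at hjordan
    nlinarith
  nlinarith [sin_sq_le_one (m * t / 2)]

theorem kernel_est_HBV_general
    (β : ℝ) (hβ : 0 ≤ β)
    (a : ℕ → ℕ → ℝ)
    (hnn : ∀ n k : ℕ, 0 ≤ a n k)
    (C : ℝ)
    (hA : ∀ n m : ℕ, m ≤ n →
      ∑ k ∈ Finset.range m,
        ((k : ℝ) + 1) ^ β * |a n k / ((k : ℝ) + 1) ^ β - a n (k + 1) / ((k : ℝ) + 2) ^ β|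
        ≤ C * a n m)
    :
    ∃ C' : ℝ, 0 < C' ∧ ∀ (n : ℕ) (t : ℝ), 0 < t → t ≤ Real.pi →
      |kernelK a n t| ≤ C' * (a n n / t ^ 2) := by
  refine ⟨(1 + |C|) * π ^ 2, by positivity, fun n t ht htπ => ?_⟩
  have hvar := sum_abs_sub_succ_le (a n) (fun k => ((k : ℝ) + 1) ^ β) (hnn n)
    (fun k => by positivity)
    (monotone_nat_of_le_succ fun k => rpow_le_rpow (by positivity) (by simp) hβ) n
  simp only [Nat.cast_add, Nat.cast_one, add_assoc, one_add_one_eq_two] at hvar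
  have hrow : ∑ k ∈ range n, |a n k - a n (k + 1)| ≤ (1 + 2 * C) * a n n := by
    linarith [hA n n le_rfl]
  have habel := norm_sum_range_succ_smul_le (a n)
    (fun j => sin (((j : ℝ) + 1 / 2) * t) / (2 * sin (t / 2)))
    (abs_sum_range_sin_div_two_sin_half_le ht htπ) n
  simp only [smul_eq_mul, Real.norm_eq_abs, abs_of_nonneg (hnn n n)] at habel
  calc |kernelK a n t|
        ≤ (a n n + ∑ k ∈ range n, |a n k - a n (k + 1)|) * (π ^ 2 / (2 * t ^ 2)) := by
        simpa only [kernelK, mul_div_assoc] using habel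
    _ ≤ (a n n + (1 + 2 * |C|) * a n n) * (π ^ 2 / (2 * t ^ 2)) := by
        gcongr
        exact hrow.trans (mul_le_mul_of_nonneg_right (by linarith [le_abs_self C]) (hnn n n))
    _ = (1 + |C|) * π ^ 2 * (a n n / t ^ 2) := by field_simp; ring

theorem kernel_est_HBV
    (β : ℝ) (hβ : 0 ≤ β)
    (a : ℕ → ℕ → ℝ) (htri : ∀ n k : ℕ, n < k → a n k = 0)
    (hnn : ∀ n k : ℕ, 0 ≤ a n k)
    (C : ℝ) (hC : 0 < C)
    (hA : ∀ n m : ℕ, m ≤ n →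
      ∑ k ∈ Finset.range m,
        ((k : ℝ) + 1) ^ β * |a n k / ((k : ℝ) + 1) ^ β - a n (k + 1) / ((k : ℝ) + 2) ^ β|
        ≤ C * a n m)
    :
    ∃ C' : ℝ, 0 < C' ∧ ∀ (n : ℕ) (t : ℝ), 0 < t → t ≤ Real.pi →
      |kernelK a n t| ≤ C' * (a n n / t ^ 2) :=
  kernel_est_HBV_general β hβ a hnn C hA
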